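/- arXiv:1710.11189 — 4 statements merged into one kernel-verified Lean document; each statement's English description precedes it below -/
import Mathlib

section
/- Let C₁,…,C_N ∈ M_{m×n}(ℂ), let L ∈ M_{mn}(O_N) be the linear matrix germ L(u) = Σ_{λ=1}^N u_λ C_λ in coordinates u = (u₁,…,u_N) on ℂ^N, and for d ≥ 1 let F ∈ M_{mn}(O_N) be given by F(x) = L(x₁^d,…,x_N^d) = Σ_{λ=1}^N x_λ^d C_λ. Suppose there exists a natural number r such that the O_N-submodule of M_{mn}(O_N) generated by the matrices u_λ·C_λ (λ = 1,…,N, where C_λ = ∂L/∂u_λ) together with the matrices R_{lk}(L) (1 ≤ l,k ≤ m) and C_{pq}(L) (1 ≤ p,q ≤ n) contains 𝔪_N^r·M_{mn}(O_N). Then there exists a natural number s such that the G-tangent space of F satisfies TG(F) ⊇ 𝔪_N^s·M_{mn}(O_N). -/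
open Filter Topology MvPolynomial

noncomputable section

/-- The ring `O_N` of germs at `0` of analytic functions on `ℂ^N`, as a subring of the
ring of germs at `0` of all functions `ℂ^N → ℂ`. -/
def Ogerm (N : ℕ) : Subring (Filter.Germ (𝓝 (0 : Fin N → ℂ)) ℂ) where
  carrier := {φ | ∃ f : (Fin N → ℂ) → ℂ, AnalyticAt ℂ f 0 ∧ φ = Filter.Germ.ofFun f}
  mul_mem' := by
    rintro _ _ ⟨f, hf, rfl⟩ ⟨g, hg, rfl⟩
    exact ⟨f * g, hf.mul hg, rfl⟩
  one_mem' := ⟨fun _ => 1, analyticAt_const, rfl⟩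
  add_mem' := by
    rintro _ _ ⟨f, hf, rfl⟩ ⟨g, hg, rfl⟩
    exact ⟨f + g, hf.add hg, rfl⟩
  zero_mem' := ⟨fun _ => 0, analyticAt_const, rfl⟩
  neg_mem' := by
    rintro _ ⟨f, hf, rfl⟩
    exact ⟨-f, hf.neg, rfl⟩

/-- Polynomials are analytic. -/
lemma analyticAt_eval {N : ℕ} (p : MvPolynomial (Fin N) ℂ) (x : Fin N → ℂ) :
    AnalyticAt ℂ (fun y => MvPolynomial.eval y p) x := by
  induction p using MvPolynomial.induction_on with
  | C a => simpa using analyticAt_const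
  | add p q hp hq => simp only [map_add]; exact hp.add hq
  | mul_X p i hp =>
      simp only [map_mul, eval_X]; exact
        hp.mul ((ContinuousLinearMap.proj (R := ℂ) (φ := fun _ : Fin N => ℂ) i).analyticAt x)

/-- The germ at `0` of (the evaluation of) a polynomial, as an element of `O_N`. -/
def polyGerm {N : ℕ} (p : MvPolynomial (Fin N) ℂ) : Ogerm N :=
  ⟨Filter.Germ.ofFun (fun x => MvPolynomial.eval x p), ⟨_, analyticAt_eval p 0, rfl⟩⟩

/-- The maximal ideal `𝔪_N` of `O_N`: germs vanishing at the origin. -/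
def mIdeal (N : ℕ) : Ideal (Ogerm N) :=
  RingHom.ker ((Filter.Germ.valueRingHom (x := (0 : Fin N → ℂ))).comp (Ogerm N).subtype)

/-- The germ in `M_{mn}(O_N)` of a matrix of polynomials. -/
def matGerm {N m n : ℕ} (P : Fin m → Fin n → MvPolynomial (Fin N) ℂ) :
    Matrix (Fin m) (Fin n) (Ogerm N) :=
  Matrix.of fun i j => polyGerm (P i j)

/-- The generators `R_{lk}(P)` (matrix whose `l`-th row is the `k`-th row of `P`, other rows
zero) and `C_{pq}(P)` (matrix whose `p`-th column is the `q`-th column of `P`, other columns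
zero) of the row/column part of the tangent space, for a polynomial matrix `P`. -/
def rowColGenerators {N m n : ℕ} (P : Fin m → Fin n → MvPolynomial (Fin N) ℂ) :
    Set (Matrix (Fin m) (Fin n) (Ogerm N)) :=
  (Set.range fun lk : Fin m × Fin m =>
    (Matrix.of fun i j => if i = lk.1 then polyGerm (P lk.2 j) else 0 :
      Matrix (Fin m) (Fin n) (Ogerm N))) ∪
  (Set.range fun pq : Fin n × Fin n =>
    (Matrix.of fun i j => if j = pq.1 then polyGerm (P i pq.2) else 0 :
      Matrix (Fin m) (Fin n) (Ogerm N)))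

/-- `J(P)`: the `O_N`-submodule generated by the partial derivatives `∂P/∂x_λ` of a
polynomial matrix `P`. -/
def jacobianModule {N m n : ℕ} (P : Fin m → Fin n → MvPolynomial (Fin N) ℂ) :
    Submodule (Ogerm N) (Matrix (Fin m) (Fin n) (Ogerm N)) :=
  Submodule.span (Ogerm N)
    (Set.range fun lam : Fin N => matGerm fun i j => pderiv lam (P i j))

/-- The `G`-tangent space `TG(P) = 𝔪_N·J(P) + O_N·{R_{lk}(P), C_{pq}(P)}` of a polynomial
matrix `P`. -/
def GTangent {N m n : ℕ} (P : Fin m → Fin n → MvPolynomial (Fin N) ℂ) :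
    Submodule (Ogerm N) (Matrix (Fin m) (Fin n) (Ogerm N)) :=
  mIdeal N • jacobianModule P ⊔ Submodule.span (Ogerm N) (rowColGenerators P)

/-! The substitution `x ↦ (x₁^d, …, x_N^d)` is a ring endomorphism `φ` of `O_N`. Applied entrywise,
it sends the generators `u_λ C_λ` of the hypothesis to `x_λ^d C_λ = d⁻¹ x_λ ∂F/∂x_λ ∈ 𝔪·J(F)`
(Euler's identity) and `R_{lk}(L)`, `C_{pq}(L)` to `R_{lk}(F)`, `C_{pq}(F)`; hence the ideal
generated by `φ(𝔪^r)` multiplies `M_{mn}(O_N)` into `TG(F)`. That ideal contains every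
`x_i^{rd}`, and by Hadamard's lemma `𝔪 = (x_1, …, x_N)`, so by pigeonhole
`𝔪^{Nrd+1} ⊆ (x_1^{rd}, …, x_N^{rd})`. -/

section Hadamard

variable {𝕜 E F : Type*} [NontriviallyNormedField 𝕜] [NormedAddCommGroup E] [NormedSpace 𝕜 E]
  [NormedAddCommGroup F] [NormedSpace 𝕜 F] [CompleteSpace F]

theorem AnalyticAt.exists_eventually_eq_apply_self {f : E → F} (hf : AnalyticAt 𝕜 f 0)
    (h0 : f 0 = 0) :
    ∃ H : E → E →L[𝕜] F, AnalyticAt 𝕜 H 0 ∧ ∀ᶠ x in 𝓝 0, f x = H x x := by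
  obtain ⟨p, hp⟩ := hf
  have hshift : 0 < p.shift.radius := p.radius_shift ▸ hp.radius_pos
  refine ⟨p.shift.sum, (p.shift.hasFPowerSeriesOnBall hshift).analyticAt, ?_⟩
  filter_upwards [hp.eventually_hasSum, Metric.eball_mem_nhds (0 : E) hshift] with x hfx hx
  have hsucc : HasSum (fun n => p (n + 1) fun _ => x) (f x) := by
    simpa [hp.coeff_zero, h0] using (hasSum_nat_add_iff' 1).mpr hfx
  have hH : HasSum (fun n => p (n + 1) fun _ => x) (p.shift.sum x x) := by
    refine ((p.shift.hasSum hx).mapL (ContinuousLinearMap.apply 𝕜 F x)).congr_fun fun n => ?_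
    simp only [FormalMultilinearSeries.shift, ContinuousLinearMap.apply_apply,
      ContinuousMultilinearMap.curryRight_apply]
    congr 1
    ext i
    refine Fin.lastCases ?_ (fun j => ?_) i <;> simp
  exact hsucc.unique hH

theorem AnalyticAt.exists_eventually_eq_sum_smul {ι : Type*} [Fintype ι] [DecidableEq ι]
    {f : (ι → 𝕜) → F} (hf : AnalyticAt 𝕜 f 0) (h0 : f 0 = 0) :
    ∃ g : ι → (ι → 𝕜) → F, (∀ i, AnalyticAt 𝕜 (g i) 0) ∧
      ∀ᶠ x in 𝓝 0, f x = ∑ i, x i • g i x := by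
  obtain ⟨H, hH, hfH⟩ := hf.exists_eventually_eq_apply_self h0
  refine ⟨fun i x => H x (Pi.single i 1), fun i => ?_, ?_⟩
  · exact ((ContinuousLinearMap.apply 𝕜 F (Pi.single i (1 : 𝕜))).analyticAt (H 0)).comp hH
  · filter_upwards [hfH] with x hx
    have hbasis : x = ∑ i, x i • (Pi.single i 1 : ι → 𝕜) := by
      simp_rw [← Pi.single_smul', smul_eq_mul, mul_one, Finset.univ_sum_single]
    rw [hx]
    nth_rewrite 2 [hbasis]
    simp_rw [map_sum, map_smul]

end Hadamard

theorem Ideal.finset_iSup_pow_le {R ι : Type*} [CommRing R] [DecidableEq ι] (s : Finset ι)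
    (J : ι → Ideal R) (k : ℕ) :
    (⨆ i ∈ s, J i) ^ (s.card * k + 1) ≤ ⨆ i ∈ s, J i ^ k := by
  induction s using Finset.induction_on with
  | empty => simp
  | @insert a t ha ih =>
    rw [Finset.iSup_insert, Finset.iSup_insert, Finset.card_insert_of_notMem ha,
      show (t.card + 1) * k + 1 = k + (t.card * k + 1) by ring]
    exact Ideal.sup_pow_add_le_pow_sup_pow.trans (sup_le_sup_left ih _)

theorem Ideal.span_range_pow_le {R ι : Type*} [CommRing R] [Fintype ι] (a : ι → R) (k : ℕ) :
    Ideal.span (Set.range a) ^ (Fintype.card ι * k + 1) ≤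
      Ideal.span (Set.range fun i => a i ^ k) := by
  classical
  simpa [Submodule.span_range_eq_iSup, Ideal.span_singleton_pow] using
    Ideal.finset_iSup_pow_le Finset.univ (fun i => Ideal.span {a i}) k

def polyGermHom (N : ℕ) : MvPolynomial (Fin N) ℂ →+* Ogerm N :=
  ((Filter.Germ.coeRingHom _).comp (RingHom.pi fun x => MvPolynomial.eval x)).codRestrict _
    fun p => ⟨_, analyticAt_eval p 0, rfl⟩

@[simp]
theorem polyGermHom_apply {N : ℕ} (p : MvPolynomial (Fin N) ℂ) : polyGermHom N p = polyGerm p :=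
  rfl

theorem polyGerm_mem_mIdeal_iff {N : ℕ} {p : MvPolynomial (Fin N) ℂ} :
    polyGerm p ∈ mIdeal N ↔ eval 0 p = 0 :=
  Iff.rfl

theorem mIdeal_le_span_X (N : ℕ) :
    mIdeal N ≤ Ideal.span (Set.range fun i => polyGerm (X i : MvPolynomial (Fin N) ℂ)) := by
  rintro ⟨_, f, hf, rfl⟩ (hf0 : f 0 = 0)
  obtain ⟨g, hg, hfg⟩ := hf.exists_eventually_eq_sum_smul hf0
  have hsum : (⟨f, f, hf, rfl⟩ : Ogerm N) =
      ∑ i, polyGerm (X i) * ⟨g i, g i, hg i, rfl⟩ := by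
    apply Subtype.ext
    calc Filter.Germ.ofFun f
        = Filter.Germ.coeRingHom _ (∑ i, (fun x : Fin N → ℂ => x i) * g i) :=
          Filter.Germ.coe_eq.mpr (hfg.mono fun x hx => by simpa [Finset.sum_apply] using hx)
      _ = _ := by simp [map_sum, polyGerm]
  rw [hsum]
  exact Ideal.sum_mem _ fun i _ => Ideal.mul_mem_right _ _ (Ideal.subset_span ⟨i, rfl⟩)

theorem mIdeal_pow_le_span_X_pow (N k : ℕ) :
    mIdeal N ^ (N * k + 1) ≤
      Ideal.span (Set.range fun i => polyGerm (X i : MvPolynomial (Fin N) ℂ) ^ k) := by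
  simpa using (Ideal.pow_right_mono (mIdeal_le_span_X N) _).trans (Ideal.span_range_pow_le _ k)

def Filter.Germ.compTendstoRingHom {α γ R : Type*} [Semiring R] {l : Filter α} {lc : Filter γ}
    (g : γ → α) (hg : Tendsto g lc l) : Germ l R →+* Germ lc R where
  toFun φ := φ.compTendsto g hg
  map_one' := rfl
  map_mul' φ ψ := Germ.inductionOn₂ φ ψ fun _ _ => rfl
  map_zero' := rfl
  map_add' φ ψ := Germ.inductionOn₂ φ ψ fun _ _ => rfl

namespace Ogerm

variable {M N : ℕ}

def comap (g : (Fin M → ℂ) → Fin N → ℂ) (hg : AnalyticAt ℂ g 0) (hg0 : g 0 = 0) :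
    Ogerm N →+* Ogerm M :=
  have hgt : Tendsto g (𝓝 0) (𝓝 0) := hg0 ▸ hg.continuousAt.tendsto
  ((Germ.compTendstoRingHom g hgt).comp (Ogerm N).subtype).codRestrict _
    fun ⟨_, f, hf, hfa⟩ => ⟨f ∘ g, (hg0 ▸ hf).comp hg, hfa ▸ Germ.coe_compTendsto f hgt⟩

def polySubst (q : Fin N → MvPolynomial (Fin M) ℂ) (hq : ∀ i, eval 0 (q i) = 0) :
    Ogerm N →+* Ogerm M :=
  comap (fun x i => eval x (q i)) (AnalyticAt.pi fun i => analyticAt_eval (q i) 0) (funext hq)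

@[simp]
theorem polySubst_polyGerm (q : Fin N → MvPolynomial (Fin M) ℂ) (hq : ∀ i, eval 0 (q i) = 0)
    (p : MvPolynomial (Fin N) ℂ) : polySubst q hq (polyGerm p) = polyGerm (bind₁ q p) := by
  apply Subtype.ext
  exact congrArg Germ.ofFun (funext fun x => (eval₂Hom_bind₁ (RingHom.id ℂ) x q p).symm)

end Ogerm

theorem Ideal.map_smul_top_le_span_image {R S ι κ : Type*} [CommRing R] [CommRing S]
    [Fintype ι] [Fintype κ] [DecidableEq ι] [DecidableEq κ] (φ : R →+* S) {I : Ideal R}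
    {T : Set (Matrix ι κ R)} (h : I • (⊤ : Submodule R (Matrix ι κ R)) ≤ Submodule.span R T) :
    I.map φ • (⊤ : Submodule S (Matrix ι κ S)) ≤
      Submodule.span S ((fun A => A.map φ) '' T) := by
  set P := Submodule.span S ((fun A => A.map φ) '' T)
  have hT : ∀ A ∈ Submodule.span R T, A.map φ ∈ P :=
    Submodule.span_le (p := P.comap φ.toSemilinearMap.mapMatrix).mpr
      fun A hA => Submodule.subset_span ⟨A, hA, rfl⟩
  -- `φ` need not be surjective, so expand `B` along the matrix units, which `φ` fixes.
  have hgen : ∀ a ∈ I, ∀ B : Matrix ι κ S, φ a • B ∈ P := by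
    intro a ha B
    rw [B.matrix_eq_sum_single]
    simp only [Finset.smul_sum]
    refine Submodule.sum_mem _ fun i _ => Submodule.sum_mem _ fun j _ => ?_
    have hsingle : φ a • Matrix.single i j (B i j) =
        B i j • (a • Matrix.single i j (1 : R)).map φ := by
      simp [Matrix.map_single, Matrix.smul_single, mul_comm]
    rw [hsingle]
    exact P.smul_mem _ (hT _ (h (Submodule.smul_mem_smul ha trivial)))
  have hI : I ≤ (P.colon Set.univ).comap φ := fun a ha =>
    Submodule.mem_colon.mpr fun B _ => hgen a ha B
  exact Submodule.smul_le.mpr fun s hs B _ =>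
    Submodule.mem_colon.mp (Ideal.map_le_iff_le_comap.mpr hI hs) B trivial

theorem MvPolynomial.C_inv_mul_X_mul_pderiv_sum_C_mul_X_pow {σ K : Type*} [Fintype σ] [Field K]
    [CharZero K] (a : σ → K) {d : ℕ} (hd : d ≠ 0) (k : σ) :
    C (d : K)⁻¹ * X k * pderiv k (∑ i, C (a i) * X i ^ d) = X k ^ d * C (a k) := by
  classical
  have hinv : C (d : K)⁻¹ * (d : MvPolynomial σ K) = 1 := by
    rw [← map_natCast C, ← C_mul, inv_mul_cancel₀ (Nat.cast_ne_zero.mpr hd), C_1]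
  obtain ⟨e, rfl⟩ : ∃ e, d = e + 1 := ⟨d - 1, by omega⟩
  rw [map_sum, Finset.sum_eq_single k (fun i _ hik => by simp [pderiv_X, hik]) (by simp),
    pderiv_C_mul, pderiv_pow, pderiv_X_self, Nat.add_sub_cancel]
  linear_combination (X k ^ (e + 1) * C (a k)) * hinv

section PolySubst

variable {M N m n : ℕ} (q : Fin N → MvPolynomial (Fin M) ℂ) (hq : ∀ i, eval 0 (q i) = 0)

theorem map_polySubst_matGerm (P : Fin m → Fin n → MvPolynomial (Fin N) ℂ) :
    (matGerm P).map (Ogerm.polySubst q hq) = matGerm fun i j => bind₁ q (P i j) := by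
  ext i j
  simp [matGerm]

theorem image_map_polySubst_rowColGenerators (P : Fin m → Fin n → MvPolynomial (Fin N) ℂ) :
    (fun A => A.map (Ogerm.polySubst q hq)) '' rowColGenerators P =
      rowColGenerators fun i j => bind₁ q (P i j) := by
  simp only [rowColGenerators, Set.image_union, ← Set.range_comp]
  congr 1 <;> congr 1 <;> ext _ i j <;> simp [apply_ite (Ogerm.polySubst q hq)]

end PolySubst

def Ogerm.powSubst (N : ℕ) {d : ℕ} (hd : d ≠ 0) : Ogerm N →+* Ogerm N :=
  Ogerm.polySubst (fun i => X i ^ d) fun i => by simp [hd]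

theorem image_map_powSubst_subset_GTangent {N m n d : ℕ} (hd : d ≠ 0)
    (C : Fin N → Matrix (Fin m) (Fin n) ℂ) :
    (fun A => A.map (Ogerm.powSubst N hd)) ''
        ((Set.range fun lam : Fin N => matGerm fun i j => X lam * MvPolynomial.C (C lam i j)) ∪
          rowColGenerators fun i j => ∑ lam : Fin N, MvPolynomial.C (C lam i j) * X lam) ⊆
      GTangent fun i j => ∑ lam : Fin N, MvPolynomial.C (C lam i j) * X lam ^ d := by
  rintro _ ⟨A, ⟨k, rfl⟩ | hA, rfl⟩
  · refine Submodule.mem_sup_left ?_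
    have hjac : (matGerm fun i j => X k * MvPolynomial.C (C k i j)).map (Ogerm.powSubst N hd) =
        polyGerm (MvPolynomial.C (d : ℂ)⁻¹ * X k : MvPolynomial (Fin N) ℂ) •
          matGerm fun i j => pderiv k (∑ lam, MvPolynomial.C (C lam i j) * X lam ^ d) := by
      rw [Ogerm.powSubst, map_polySubst_matGerm]
      ext i j
      simp only [matGerm, Matrix.of_apply, Matrix.smul_apply, smul_eq_mul, ← polyGermHom_apply,
        ← map_mul, C_inv_mul_X_mul_pderiv_sum_C_mul_X_pow _ hd]
      simp
    dsimp only
    rw [hjac]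
    exact Submodule.smul_mem_smul (polyGerm_mem_mIdeal_iff.mpr (by simp))
      (Submodule.subset_span ⟨k, rfl⟩)
  · refine Submodule.mem_sup_right (Submodule.subset_span ?_)
    have hmem := Set.mem_image_of_mem (fun A => A.map (Ogerm.powSubst N hd)) hA
    rw [Ogerm.powSubst, image_map_polySubst_rowColGenerators] at hmem
    simp only [map_sum, map_mul, bind₁_C_right, bind₁_X_right] at hmem
    exact hmem

theorem mIdeal_pow_le_map_powSubst (N r : ℕ) {d : ℕ} (hd : d ≠ 0) :
    mIdeal N ^ (N * (r * d) + 1) ≤ (mIdeal N ^ r).map (Ogerm.powSubst N hd) := by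
  refine (mIdeal_pow_le_span_X_pow N (r * d)).trans
    (Ideal.span_le.mpr (Set.forall_mem_range.mpr fun i => ?_))
  have hX : polyGerm (X i : MvPolynomial (Fin N) ℂ) ^ (r * d) =
      Ogerm.powSubst N hd (polyGerm (X i) ^ r) := by
    simp only [Ogerm.powSubst, map_pow, Ogerm.polySubst_polyGerm, bind₁_X_right]
    simp only [← polyGermHom_apply, map_pow, ← pow_mul, mul_comm d r]
  rw [SetLike.mem_coe, hX]
  exact Ideal.mem_map_of_mem _ (Ideal.pow_mem_pow (polyGerm_mem_mIdeal_iff.mpr (by simp)) r)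

theorem power_substitution_preserves_condition_general
    {N m n : ℕ}
    (C : Fin N → Matrix (Fin m) (Fin n) ℂ) (d : ℕ) (hd : 1 ≤ d) (r : ℕ)
    (hL : (mIdeal N) ^ r • (⊤ : Submodule (Ogerm N) (Matrix (Fin m) (Fin n) (Ogerm N))) ≤
      Submodule.span (Ogerm N)
        ((Set.range fun lam : Fin N =>
            matGerm fun i j => X lam * MvPolynomial.C (C lam i j)) ∪
          rowColGenerators fun i j => ∑ lam : Fin N, MvPolynomial.C (C lam i j) * X lam)) :
    ∃ s : ℕ,
      (mIdeal N) ^ s • (⊤ : Submodule (Ogerm N) (Matrix (Fin m) (Fin n) (Ogerm N))) ≤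
        GTangent fun i j => ∑ lam : Fin N, MvPolynomial.C (C lam i j) * X lam ^ d := by
  have hd₀ : d ≠ 0 := Nat.one_le_iff_ne_zero.mp hd
  refine ⟨N * (r * d) + 1, ?_⟩
  calc (mIdeal N) ^ (N * (r * d) + 1) • ⊤
      ≤ (mIdeal N ^ r).map (Ogerm.powSubst N hd₀) • ⊤ :=
        Submodule.smul_mono_left (mIdeal_pow_le_map_powSubst N r hd₀)
    _ ≤ _ := Ideal.map_smul_top_le_span_image _ hL
    _ ≤ _ := Submodule.span_le.mpr (image_map_powSubst_subset_GTangent hd₀ C)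

/-- Let `L(u) = Σ_λ u_λ C_λ` be a linear matrix germ and `F(x) = Σ_λ x_λ^d C_λ`.  If for
some `r` the `O_N`-submodule generated by the matrices `u_λ·C_λ = u_λ·∂L/∂u_λ` together with
`R_{lk}(L)` and `C_{pq}(L)` contains `𝔪_N^r·M_{mn}(O_N)`, then there is `s` with
`TG(F) ⊇ 𝔪_N^s·M_{mn}(O_N)`. -/
theorem power_substitution_preserves_condition
    {N m n : ℕ} (hm : 0 < m) (hn : 0 < n) (hN : 0 < N)
    (C : Fin N → Matrix (Fin m) (Fin n) ℂ) (d : ℕ) (hd : 1 ≤ d) (r : ℕ)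
    (hL : (mIdeal N) ^ r • (⊤ : Submodule (Ogerm N) (Matrix (Fin m) (Fin n) (Ogerm N))) ≤
      Submodule.span (Ogerm N)
        ((Set.range fun lam : Fin N =>
            matGerm fun i j => X lam * MvPolynomial.C (C lam i j)) ∪
          rowColGenerators fun i j => ∑ lam : Fin N, MvPolynomial.C (C lam i j) * X lam)) :
    ∃ s : ℕ,
      (mIdeal N) ^ s • (⊤ : Submodule (Ogerm N) (Matrix (Fin m) (Fin n) (Ogerm N))) ≤
        GTangent fun i j => ∑ lam : Fin N, MvPolynomial.C (C lam i j) * X lam ^ d :=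
  power_substitution_preserves_condition_general C d hd r hL

end
end

section
/- Let d ≥ 2 and let F : ℂ^4 → M_{2×2}(ℂ) be given by F(x₁,x₂,x₃,x₄) = [[x₁^d, x₂^d],[x₃^d, x₄^d]]. Then for every t ∈ ℂ with t ≠ 0, at the point x = (t,0,0,0) one has rank F(x) = 1 and im(DF_x) + {B ∈ M_{2×2}(ℂ) : B(ker F(x)) ⊆ im F(x)} ≠ M_{2×2}(ℂ). Hence F fails the EIDS transversality condition at points arbitrarily close to 0, so F does not define an EIDS. -/
/-- The tangent space at `A` to the stratum of `m×n` matrices of the same rank as `A`: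
matrices `B` with `B(ker A) ⊆ im A`. -/
def rankStratumTangent {m n : ℕ} (A : Matrix (Fin m) (Fin n) ℂ) :
    Set (Matrix (Fin m) (Fin n) ℂ) :=
  {B | ∀ u : Fin n → ℂ, A.mulVec u = 0 → ∃ z : Fin n → ℂ, B.mulVec u = A.mulVec z}

/-- `F` is transverse at `x` to the rank stratum through `F(x)`:
`im(DF_x) + T_{F(x)} = M_{m×n}(ℂ)`. -/
def TransverseAt {N m n : ℕ} (F : (Fin N → ℂ) → Matrix (Fin m) (Fin n) ℂ)
    (x : Fin N → ℂ) : Prop :=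
  ∀ C : Matrix (Fin m) (Fin n) ℂ, ∃ (v : Fin N → ℂ) (B : Matrix (Fin m) (Fin n) ℂ),
    B ∈ rankStratumTangent (F x) ∧
    C = Matrix.of (fderiv ℂ (fun y i j => F y i j) x v) + B

/-- For `d ≥ 2`, the map `F(x) = [[x₁^d, x₂^d],[x₃^d, x₄^d]]` fails the EIDS transversality
condition at every point `(t,0,0,0)` with `t ≠ 0`: there `F` has rank `1` and
`im(DF_x) + T_{F(x)} ≠ M_{2×2}(ℂ)`.  Hence `F` does not define an EIDS. -/
theorem diagonal_powers_not_EIDS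
    (d : ℕ) (hd : 2 ≤ d) (t : ℂ) (ht : t ≠ 0) :
    Matrix.rank
        ((fun x : Fin 4 → ℂ =>
          (!![x 0 ^ d, x 1 ^ d; x 2 ^ d, x 3 ^ d] : Matrix (Fin 2) (Fin 2) ℂ)) ![t, 0, 0, 0])
      = 1 ∧
    ¬ TransverseAt
        (fun x : Fin 4 → ℂ =>
          (!![x 0 ^ d, x 1 ^ d; x 2 ^ d, x 3 ^ d] : Matrix (Fin 2) (Fin 2) ℂ))
        ![t, 0, 0, 0] := by
  have hzero : (0:ℂ) ^ d = 0 := zero_pow (by omega)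
  have hA : (fun x : Fin 4 → ℂ =>
        (!![x 0 ^ d, x 1 ^ d; x 2 ^ d, x 3 ^ d] : Matrix (Fin 2) (Fin 2) ℂ)) ![t, 0, 0, 0]
      = !![t ^ d, 0; 0, 0] := by simp [hzero]
  constructor
  · rw [hA]
    have hdiag : (!![t ^ d, 0; 0, 0] : Matrix (Fin 2) (Fin 2) ℂ)
        = Matrix.diagonal ![t ^ d, 0] := by
      ext i j; fin_cases i <;> fin_cases j <;> simp [Matrix.diagonal]
    rw [hdiag, Matrix.rank_diagonal, Fintype.card_subtype]
    have h0 : t ^ d ≠ 0 := pow_ne_zero _ ht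
    have hfil : (Finset.univ.filter fun i => ![t ^ d, 0] i ≠ 0) = {0} := by
      ext i; fin_cases i <;> simp [h0]
    rw [hfil]; simp
  ·
    intro h
    obtain ⟨v, B, hB, hC⟩ := h !![0, 0; 0, 1]
    have hA : (fun x : Fin 4 → ℂ =>
            (!![x 0 ^ d, x 1 ^ d; x 2 ^ d, x 3 ^ d] : Matrix (Fin 2) (Fin 2) ℂ)) ![t, 0, 0, 0]
        = !![t ^ d, 0; 0, 0] := by
      have : (0:ℂ) ^ d = 0 := zero_pow (by omega)
      simp [this]
    rw [hA] at hB
    obtain ⟨z, hz⟩ := hB ![0, 1] (by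
      funext i; fin_cases i <;> simp [Matrix.mulVec, dotProduct])
    have hB11 : B 1 1 = 0 := by
      have := congrFun hz 1
      simpa [Matrix.mulVec, dotProduct] using this
    set x₀ : Fin 4 → ℂ := ![t, 0, 0, 0] with hx₀
    set f : (Fin 4 → ℂ) → Fin 2 → Fin 2 → ℂ :=
      fun y i j => (!![y 0 ^ d, y 1 ^ d; y 2 ^ d, y 3 ^ d] : Matrix (Fin 2) (Fin 2) ℂ) i j with hf
    have hdiff : DifferentiableAt ℂ f x₀ := by
      apply differentiableAt_pi.2
      intro i
      apply differentiableAt_pi.2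
      intro j
      fin_cases i <;> fin_cases j <;>
        · simp only [hf, Matrix.cons_val_zero, Matrix.cons_val_one, Matrix.head_cons,
            Matrix.cons_val', Matrix.empty_val', Matrix.cons_val_fin_one, Matrix.head_fin_const]
          exact ((differentiable_pi.1 differentiable_id _).pow d).differentiableAt
    set π : (Fin 2 → Fin 2 → ℂ) →L[ℂ] ℂ :=
      (ContinuousLinearMap.proj (R := ℂ) (φ := fun _ : Fin 2 => ℂ) 1).comp
        (ContinuousLinearMap.proj (R := ℂ) (φ := fun _ : Fin 2 => Fin 2 → ℂ) 1) with hπ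
    have hcomp : fderiv ℂ (π ∘ f) x₀ = π.comp (fderiv ℂ f x₀) := by
      rw [fderiv_comp _ π.differentiableAt hdiff, π.fderiv]
    have hg : HasDerivAt (fun s : ℂ => s ^ d) 0 0 := by
      have := hasDerivAt_pow d (0 : ℂ)
      simpa [zero_pow (show d - 1 ≠ 0 by omega)] using this
    have hproj : HasFDerivAt (fun y : Fin 4 → ℂ => y 3)
        (ContinuousLinearMap.proj (R := ℂ) (φ := fun _ : Fin 4 => ℂ) 3) x₀ :=
      hasFDerivAt_apply 3 x₀
    have hcomp2 : HasFDerivAt (fun y : Fin 4 → ℂ => y 3 ^ d) (0 : (Fin 4 → ℂ) →L[ℂ] ℂ) x₀ := by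
      have hx3 : x₀ 3 = 0 := by simp [hx₀]
      have hg' : HasFDerivAt (fun s : ℂ => s ^ d)
          (ContinuousLinearMap.smulRight (1 : ℂ →L[ℂ] ℂ) 0) (x₀ 3) := by
        rw [hx3]; exact hg.hasFDerivAt
      have h2 := hg'.comp x₀ hproj
      have e1 : ((fun s : ℂ => s ^ d) ∘ fun y : Fin 4 → ℂ => y 3) = fun y : Fin 4 → ℂ => y 3 ^ d :=
        rfl
      have e2 : (ContinuousLinearMap.smulRight (1 : ℂ →L[ℂ] ℂ) (0:ℂ)).comp
          (ContinuousLinearMap.proj (R := ℂ) (φ := fun _ : Fin 4 => ℂ) 3)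
          = (0 : (Fin 4 → ℂ) →L[ℂ] ℂ) := by
        ext y; simp
      rw [e1, e2] at h2
      exact h2
    have hπf : (π ∘ f) = fun y : Fin 4 → ℂ => y 3 ^ d := by
      funext y; simp [hπ, hf]
    have hd0 : fderiv ℂ (π ∘ f) x₀ = 0 := by rw [hπf]; exact hcomp2.fderiv
    have hentry : fderiv ℂ f x₀ v 1 1 = 0 := by
      have : π.comp (fderiv ℂ f x₀) = 0 := by rw [← hcomp, hd0]
      have := congrFun (congrArg DFunLike.coe this) v
      simpa [hπ] using this
    have h11 : (1:ℂ) = fderiv ℂ f x₀ v 1 1 + B 1 1 := by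
      have := congrFun (congrFun hC 1) 1
      simpa [Matrix.add_apply] using this
    rw [hentry, hB11] at h11
    simp at h11
end

section
/- Let d ≥ 1 and let F : ℂ^4 → M_{2×2}(ℂ) be given by F(x₁,x₂,x₃,x₄) = [[x₁^d − x₂^d, x₃^d + x₄^d],[x₃^d − x₄^d, x₁^d + x₂^d]]. Then F defines an EIDS: for every x ∈ ℂ^4 with x ≠ 0, im(DF_x) + {B ∈ M_{2×2}(ℂ) : B(ker F(x)) ⊆ im F(x)} = M_{2×2}(ℂ). -/
namespace Matrix

variable {R : Type*} [CommRing R]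

theorem adjugate_adjugate_fin_two (A : Matrix (Fin 2) (Fin 2) R) : adjugate (adjugate A) = A := by
  simpa using adjugate_adjugate A (by simp)

theorem adjugate_ne_zero_fin_two {A : Matrix (Fin 2) (Fin 2) R} (hA : A ≠ 0) : adjugate A ≠ 0 :=
  fun h => hA <| by rw [← adjugate_adjugate_fin_two A, h, adjugate_zero]

theorem mul_mul_eq_trace_smul_of_det_eq_zero {X : Matrix (Fin 2) (Fin 2) R} (h : X.det = 0)
    (C : Matrix (Fin 2) (Fin 2) R) : X * C * X = (X * C).trace • X := by
  rw [det_fin_two] at h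
  ext i j
  fin_cases i <;> fin_cases j <;>
    simp [mul_apply, Fin.sum_univ_two, trace_fin_two] <;>
    [linear_combination (-(C 1 1)) * h; linear_combination C 0 1 * h;
     linear_combination C 1 0 * h; linear_combination (-(C 0 0)) * h]

theorem mulVecLin_ne_zero {m n : Type*} [Fintype n] [DecidableEq n] {A : Matrix m n R}
    (hA : A ≠ 0) : A.mulVecLin ≠ 0 := fun h =>
  hA (toLin'.injective ((toLin'_apply' A).trans (h.trans (map_zero _).symm)))

theorem ker_mulVecLin_eq_range_adjugate_mulVecLin {K : Type*} [Field K]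
    {A : Matrix (Fin 2) (Fin 2) K} (hA : A ≠ 0) (hdet : A.det = 0) :
    LinearMap.ker A.mulVecLin = LinearMap.range A.adjugate.mulVecLin := by
  symm
  apply Submodule.eq_of_le_of_finrank_le
  · rintro _ ⟨z, rfl⟩
    simp only [LinearMap.mem_ker, mulVecLin_apply, mulVec_mulVec, mul_adjugate, hdet, zero_smul,
      zero_mulVec]
  · have hker : Module.finrank K (LinearMap.ker A.mulVecLin) < 2 := by
      simpa using Submodule.finrank_lt (mt LinearMap.ker_eq_top.mp (mulVecLin_ne_zero hA))
    have hrange : 1 ≤ Module.finrank K (LinearMap.range A.adjugate.mulVecLin) :=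
      Submodule.one_le_finrank_iff.mpr
        (mt LinearMap.range_eq_bot.mp (mulVecLin_ne_zero (adjugate_ne_zero_fin_two hA)))
    omega

theorem exists_eq_adjugate_mulVec_of_mulVec_eq_zero {K : Type*} [Field K]
    {A : Matrix (Fin 2) (Fin 2) K} (hA : A ≠ 0) (hdet : A.det = 0) {u : Fin 2 → K}
    (hu : A *ᵥ u = 0) : ∃ z, A.adjugate *ᵥ z = u := by
  have : u ∈ LinearMap.ker A.mulVecLin := hu
  rwa [ker_mulVecLin_eq_range_adjugate_mulVecLin hA hdet] at this

end Matrix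

open Matrix

theorem mem_rankStratumTangent_of_det_ne_zero {n : ℕ} {A : Matrix (Fin n) (Fin n) ℂ}
    (hA : A.det ≠ 0) (B : Matrix (Fin n) (Fin n) ℂ) : B ∈ rankStratumTangent A :=
  fun u hu => ⟨0, by rw [eq_zero_of_mulVec_eq_zero hA hu, mulVec_zero, mulVec_zero]⟩

/-- `ker A = im (adj A)` and `im A = ker (adj A)`, while
`adj A * B * adj A = tr (adj A * B) • adj A`. -/
theorem mem_rankStratumTangent_of_trace_adjugate_mul_eq_zero {A B : Matrix (Fin 2) (Fin 2) ℂ}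
    (hA : A ≠ 0) (hdet : A.det = 0) (hB : (adjugate A * B).trace = 0) :
    B ∈ rankStratumTangent A := by
  intro u hu
  have hdet' : (adjugate A).det = 0 := by rw [det_adjugate, hdet, zero_pow (by simp)]
  obtain ⟨z, rfl⟩ := exists_eq_adjugate_mulVec_of_mulVec_eq_zero hA hdet hu
  have hker : adjugate A *ᵥ (B *ᵥ (adjugate A *ᵥ z)) = 0 := by
    rw [mulVec_mulVec, mulVec_mulVec, mul_mul_eq_trace_smul_of_det_eq_zero hdet', hB, zero_smul,
      zero_mulVec]
  obtain ⟨w, hw⟩ :=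
    exists_eq_adjugate_mulVec_of_mulVec_eq_zero (adjugate_ne_zero_fin_two hA) hdet' hker
  exact ⟨w, by rw [← hw, adjugate_adjugate_fin_two]⟩

theorem transverseAt_of_det_ne_zero {N n : ℕ} (F : (Fin N → ℂ) → Matrix (Fin n) (Fin n) ℂ)
    (x : Fin N → ℂ) (hx : (F x).det ≠ 0) : TransverseAt F x := fun C =>
  ⟨0, C, mem_rankStratumTangent_of_det_ne_zero hx C, by rw [map_zero, of_zero, zero_add]⟩

theorem transverseAt_of_trace_adjugate_mul_fderiv_ne_zero {N : ℕ}
    (F : (Fin N → ℂ) → Matrix (Fin 2) (Fin 2) ℂ) (x v : Fin N → ℂ) (hx : F x ≠ 0)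
    (hdet : (F x).det = 0)
    (hv : (adjugate (F x) * of (fderiv ℂ (fun y i j => F y i j) x v)).trace ≠ 0) :
    TransverseAt F x := by
  intro C
  set M := of (fderiv ℂ (fun y i j => F y i j) x v)
  set μ := (adjugate (F x) * C).trace / (adjugate (F x) * M).trace
  refine ⟨μ • v, C - μ • M, ?_, ?_⟩
  · apply mem_rankStratumTangent_of_trace_adjugate_mul_eq_zero hx hdet
    rw [Matrix.mul_sub, Matrix.mul_smul, trace_sub, trace_smul, smul_eq_mul, div_mul_cancel₀ _ hv,
      sub_self]
  · rw [map_smul]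
    exact (add_sub_cancel _ _).symm

theorem hasFDerivAt_pow_apply {ι 𝕜 : Type*} [Fintype ι] [NontriviallyNormedField 𝕜] (d : ℕ)
    (x : ι → 𝕜) :
    HasFDerivAt (fun y : ι → 𝕜 => fun k => y k ^ d)
      (ContinuousLinearMap.pi fun k =>
        ((d : 𝕜) * x k ^ (d - 1)) • (ContinuousLinearMap.proj k : (ι → 𝕜) →L[𝕜] 𝕜)) x :=
  hasFDerivAt_pi.2 fun k => (hasDerivAt_pow d (x k)).comp_hasFDerivAt x (hasFDerivAt_apply k x)

def quadMatrix {R : Type*} [Ring R] (w : Fin 4 → R) : Matrix (Fin 2) (Fin 2) R :=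
  !![w 0 - w 1, w 2 + w 3; w 2 - w 3, w 0 + w 1]

theorem quadMatrix_add {R : Type*} [Ring R] (a b : Fin 4 → R) :
    quadMatrix (a + b) = quadMatrix a + quadMatrix b := by
  simp only [quadMatrix, Pi.add_apply, of_add_of, cons_add_cons, empty_add_empty,
    add_add_add_comm, add_sub_add_comm]

theorem quadMatrix_smul {R : Type*} [CommRing R] (c : R) (a : Fin 4 → R) :
    quadMatrix (c • a) = c • quadMatrix a := by
  simp only [quadMatrix, Pi.smul_apply, smul_of, smul_cons, smul_empty, smul_add, smul_sub]

theorem quadMatrix_eq_zero {K : Type*} [Field K] [CharZero K] {w : Fin 4 → K}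
    (h : quadMatrix w = 0) : w = 0 := by
  have e00 : w 0 - w 1 = 0 := congrFun (congrFun h 0) 0
  have e01 : w 2 + w 3 = 0 := congrFun (congrFun h 0) 1
  have e10 : w 2 - w 3 = 0 := congrFun (congrFun h 1) 0
  have e11 : w 0 + w 1 = 0 := congrFun (congrFun h 1) 1
  ext k
  fin_cases k <;> dsimp
  · linear_combination (e00 + e11) / 2
  · linear_combination (e11 - e00) / 2
  · linear_combination (e01 + e10) / 2
  · linear_combination (e01 - e10) / 2

theorem trace_adjugate_quadMatrix_mul {R : Type*} [CommRing R] (a b : Fin 4 → R) :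
    (adjugate (quadMatrix a) * quadMatrix b).trace =
      2 * (a 0 * b 0 - a 1 * b 1 - a 2 * b 2 + a 3 * b 3) := by
  rw [quadMatrix, quadMatrix, adjugate_fin_two_of, mul_fin_two, trace_fin_two_of]
  ring

def quadMatrixLinearMap (R : Type*) [CommRing R] : (Fin 4 → R) →ₗ[R] (Fin 2 → Fin 2 → R) where
  toFun w := quadMatrix w
  map_add' := quadMatrix_add
  map_smul' := quadMatrix_smul

theorem fderiv_quadMatrix_pow_apply (d : ℕ) (x v : Fin 4 → ℂ) :
    of (fderiv ℂ (fun y i j => quadMatrix (fun k => y k ^ d) i j) x v) =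
      quadMatrix fun k => (d : ℂ) * x k ^ (d - 1) * v k := by
  have h : HasFDerivAt (fun y i j => quadMatrix (fun k => y k ^ d) i j) _ x :=
    (quadMatrixLinearMap ℂ).toContinuousLinearMap.hasFDerivAt.comp x (hasFDerivAt_pow_apply d x)
  rw [h.fderiv]
  rfl

/-- For `d ≥ 1`, the map
`F(x) = [[x₁^d − x₂^d, x₃^d + x₄^d],[x₃^d − x₄^d, x₁^d + x₂^d]]` defines an EIDS:
it is transverse to the rank stratum through `F(x)` at every `x ≠ 0`. -/
theorem example_two_by_two_EIDS
    (d : ℕ) (hd : 1 ≤ d) (x : Fin 4 → ℂ) (hx : x ≠ 0) :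
    TransverseAt
      (fun x : Fin 4 → ℂ =>
        (!![x 0 ^ d - x 1 ^ d, x 2 ^ d + x 3 ^ d;
            x 2 ^ d - x 3 ^ d, x 0 ^ d + x 1 ^ d] : Matrix (Fin 2) (Fin 2) ℂ)) x := by
  change TransverseAt (fun y => quadMatrix fun k => y k ^ d) x
  by_cases hdet : (quadMatrix fun k => x k ^ d).det = 0
  · obtain ⟨i, hi⟩ := Function.ne_iff.mp hx
    have hpow : x i ^ d ≠ 0 := pow_ne_zero d hi
    refine transverseAt_of_trace_adjugate_mul_fderiv_ne_zero _ x (Pi.single i 1)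
      (fun h => hpow (congrFun (quadMatrix_eq_zero h) i)) hdet ?_
    rw [fderiv_quadMatrix_pow_apply, trace_adjugate_quadMatrix_mul]
    have hd0 : (d : ℂ) ≠ 0 := Nat.cast_ne_zero.mpr (by omega)
    fin_cases i <;> dsimp at hi <;> simp [hi, hd0]
  · exact transverseAt_of_det_ne_zero _ x hdet
end

section
/- Let N ≥ 2, d ≥ 1, and let F : ℂ^N → M_{2×N}(ℂ) be given by the first row (x₁^d, x₂^d, …, x_N^d) and the second row its cyclic shift (x_N^d, x₁^d, …, x_{N−1}^d). Then F defines an EIDS: for every x ∈ ℂ^N with x ≠ 0, im(DF_x) + {B ∈ M_{2×N}(ℂ) : B(ker F(x)) ⊆ im F(x)} = M_{2×N}(ℂ). -/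
/-!
If some 2×2 minor of `F(x)` is nonzero, `F(x)` is surjective and its tangent space is everything.
Otherwise the columns `(x_j^d, x_{j-1}^d)` are proportional; since `x ≠ 0` this forces every
`r_j := x_j^d` to be nonzero and `r_{j-1} = c r_j` for one constant `c ≠ 0`, so `F(x) = (1, c)ᵀ r`,
and `B` is tangent as soon as `c B₀ - B₁` is a multiple of `r`. Along `v_j = t_j x_j / d` the
derivative has rows `(t_j r_j)` and `(t_{j-1} r_{j-1})`, so it suffices to solve
`t_j - t_{j-1} = (c C₀ⱼ - C₁ⱼ) / (c r_j) - κ` cyclically, which is possible once the constant `κ`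
makes the right-hand sides sum to zero.
-/

open Matrix

theorem Fin.partialSum_last {M : Type*} [AddCommMonoid M] {n : ℕ} (f : Fin n → M) :
    Fin.partialSum f (Fin.last n) = ∑ i, f i := by
  simp [Fin.partialSum, List.take_of_length_le, List.sum_ofFn]

theorem Fin.exists_sub_sub_one_eq {M : Type*} [AddCommGroup M] {N : ℕ} [NeZero N]
    (g : Fin N → M) (hg : ∑ j, g j = 0) : ∃ t : Fin N → M, ∀ j, t j - t (j - 1) = g j := by
  obtain ⟨n, rfl⟩ := Nat.exists_eq_succ_of_ne_zero (NeZero.ne N)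
  refine ⟨Fin.partialSum (g ∘ Fin.succ), Fin.cases ?_ fun j => ?_⟩
  · have hlast : (0 : Fin (n + 1)) - 1 = Fin.last n := by simp [Fin.ext_iff, Fin.coe_neg_one]
    rw [Fin.sum_univ_succ] at hg
    rw [hlast, Fin.partialSum_last, Fin.partialSum_zero, zero_sub]
    exact neg_eq_of_add_eq_zero_left hg
  · have hsucc : j.succ - 1 = j.castSucc := Fin.ext (by simp [Fin.coe_sub_one])
    rw [hsucc, Fin.partialSum_succ, add_sub_cancel_left]
    rfl

open Fin.NatCast in
theorem Fin.forall_of_imp_sub_one {N : ℕ} [NeZero N] {P : Fin N → Prop}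
    (h : ∀ j, P j → P (j - 1)) {i : Fin N} (hi : P i) (j : Fin N) : P j := by
  have key : ∀ k : ℕ, P (i - (k : Fin N)) := by
    intro k
    induction k with
    | zero => simpa using hi
    | succ k ih => simpa [sub_add_eq_sub_sub] using h _ ih
  simpa using key (i - j).val

theorem ne_zero_of_cyclic_minors_eq_zero {K : Type*} [CommMonoidWithZero K] [NoZeroDivisors K]
    {N : ℕ} [NeZero N] {r : Fin N → K} (hr : r ≠ 0)
    (hminor : ∀ p q, r p * r (q - 1) = r q * r (p - 1)) (j : Fin N) : r j ≠ 0 := by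
  have hstep : ∀ t, r t = 0 → r (t - 1) = 0 := by
    intro t ht
    by_contra hprev
    refine hr (funext fun p => ?_)
    simpa [ht, hprev] using hminor p t
  obtain ⟨i, hi⟩ := Function.ne_iff.1 hr
  intro hj
  exact hi (Fin.forall_of_imp_sub_one hstep hj i)

theorem exists_sub_one_eq_mul {K : Type*} [Field K] {N : ℕ} [NeZero N] {r : Fin N → K}
    (hr : ∀ j, r j ≠ 0) (hminor : ∀ p q, r p * r (q - 1) = r q * r (p - 1)) :
    ∃ c ≠ 0, ∀ j, r (j - 1) = c * r j :=
  ⟨r (0 - 1) / r 0, div_ne_zero (hr _) (hr 0), fun j => by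
    field_simp [hr 0]
    linear_combination -hminor j 0⟩

theorem Matrix.mulVec_surjective_of_det_submatrix_ne_zero {K : Type*} [Field K] {m n : Type*}
    [Fintype m] [DecidableEq m] [Fintype n] [DecidableEq n]
    (A : Matrix m n K) (c : m → n) (hc : (A.submatrix id c).det ≠ 0) :
    Function.Surjective A.mulVec := by
  intro y
  let S : Matrix n m K := Matrix.of fun j k => if j = c k then 1 else 0
  have hAS : A * S = A.submatrix id c := by
    ext i k
    simp [S, Matrix.mul_apply]
  refine ⟨S *ᵥ ((A.submatrix id c)⁻¹ *ᵥ y), ?_⟩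
  rw [mulVec_mulVec, mulVec_mulVec, hAS, mul_nonsing_inv _ (isUnit_iff_ne_zero.2 hc), one_mulVec]

theorem rankStratumTangent_eq_univ_of_surjective {m n : ℕ} {A : Matrix (Fin m) (Fin n) ℂ}
    (hA : Function.Surjective A.mulVec) : rankStratumTangent A = Set.univ :=
  Set.eq_univ_of_forall fun B u _ => (hA (B *ᵥ u)).imp fun _ h => h.symm

theorem vecMulVec_mem_rankStratumTangent {m n : ℕ} {a : Fin m → ℂ} {i₀ : Fin m} (ha : a i₀ ≠ 0)
    {r : Fin n → ℂ} (hr : r ≠ 0) {B : Matrix (Fin m) (Fin n) ℂ} (c : Fin m → ℂ)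
    (hB : ∀ i j, a i₀ * B i j - a i * B i₀ j = c i * r j) :
    B ∈ rankStratumTangent (vecMulVec a r) := by
  intro u hu
  have hru : r ⬝ᵥ u = 0 := by
    have := congrFun hu i₀
    simp only [vecMulVec_mulVec, Pi.smul_apply, MulOpposite.smul_eq_mul_unop,
      MulOpposite.unop_op, Pi.zero_apply, mul_eq_zero] at this
    exact this.resolve_left ha
  have hrow : ∀ i, a i₀ * (B *ᵥ u) i = a i * (B *ᵥ u) i₀ := by
    intro i
    rw [← sub_eq_zero]
    calc a i₀ * (B *ᵥ u) i - a i * (B *ᵥ u) i₀ = c i * (r ⬝ᵥ u) := by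
          simp only [mulVec, dotProduct, Finset.mul_sum, ← Finset.sum_sub_distrib]
          exact Finset.sum_congr rfl fun j _ => by linear_combination u j * hB i j
      _ = 0 := by rw [hru, mul_zero]
  obtain ⟨j₀, hj₀⟩ : ∃ j, r j ≠ 0 := Function.ne_iff.1 hr
  refine ⟨Pi.single j₀ ((B *ᵥ u) i₀ / (a i₀ * r j₀)), funext fun i => ?_⟩
  simp only [mulVec_single, Pi.smul_apply, col_apply, vecMulVec_apply,
    MulOpposite.smul_eq_mul_unop, MulOpposite.unop_op]
  field_simp
  linear_combination hrow i

theorem transverseAt_of_surjective {N m n : ℕ} {F : (Fin N → ℂ) → Matrix (Fin m) (Fin n) ℂ}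
    {x : Fin N → ℂ} (hF : Function.Surjective (F x).mulVec) : TransverseAt F x :=
  fun C => ⟨0, C, by rw [rankStratumTangent_eq_univ_of_surjective hF]; trivial, by simp⟩

def powMatrix {N m n : ℕ} (σ : Fin m → Fin n → Fin N) (d : ℕ) (y : Fin N → ℂ) :
    Matrix (Fin m) (Fin n) ℂ :=
  Matrix.of fun i j => y (σ i j) ^ d

open ContinuousLinearMap in
theorem hasFDerivAt_powMatrix {N m n : ℕ} (σ : Fin m → Fin n → Fin N) (d : ℕ) (x : Fin N → ℂ) :
    HasFDerivAt (fun (y : Fin N → ℂ) (i : Fin m) (j : Fin n) => powMatrix σ d y i j)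
      (pi fun i => pi fun j => ((d : ℂ) * x (σ i j) ^ (d - 1)) •
        (proj (σ i j) : (Fin N → ℂ) →L[ℂ] ℂ)) x :=
  hasFDerivAt_pi.2 fun i => hasFDerivAt_pi.2 fun j =>
    (hasDerivAt_pow d (x (σ i j))).comp_hasFDerivAt x (hasFDerivAt_apply (σ i j) x)

open ContinuousLinearMap in
theorem fderiv_powMatrix_apply_mul_div {N m n : ℕ} (σ : Fin m → Fin n → Fin N) {d : ℕ}
    (hd : d ≠ 0) (x t : Fin N → ℂ) :
    fderiv ℂ (fun (y : Fin N → ℂ) (i : Fin m) (j : Fin n) => powMatrix σ d y i j) x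
        (fun k => t k * x k / d) = fun i j => t (σ i j) * x (σ i j) ^ d := by
  rw [(hasFDerivAt_powMatrix σ d x).fderiv]
  ext i j
  simp only [pi_apply, FunLike.coe_smul, Pi.smul_apply, proj_apply, smul_eq_mul]
  rw [← pow_sub_one_mul hd]
  field_simp

def cyclicShiftIndex {N : ℕ} [NeZero N] : Fin 2 → Fin N → Fin N :=
  ![fun j => j, fun j => j - 1]

theorem transverseAt_powMatrix_cyclicShiftIndex_of_sub_one_eq_mul {N : ℕ} [NeZero N] {d : ℕ}
    (hd : d ≠ 0) {x : Fin N → ℂ} (hr : ∀ j, x j ^ d ≠ 0) {c : ℂ} (hc : c ≠ 0)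
    (hrel : ∀ j, x (j - 1) ^ d = c * x j ^ d) :
    TransverseAt (powMatrix cyclicShiftIndex d) x := by
  intro C
  let w : Fin N → ℂ := fun j => (c * C 0 j - C 1 j) / (c * x j ^ d)
  let κ : ℂ := (∑ j, w j) / N
  have hκ : ∑ j, (w j - κ) = 0 := by
    simp only [Finset.sum_sub_distrib, Finset.sum_const, Finset.card_univ, Fintype.card_fin,
      nsmul_eq_mul, κ]
    field_simp [NeZero.ne N]
    ring
  obtain ⟨t, ht⟩ := Fin.exists_sub_sub_one_eq _ hκ
  refine ⟨fun k => t k * x k / d, _, ?_, (add_sub_cancel _ C).symm⟩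
  have hFx : powMatrix cyclicShiftIndex d x = vecMulVec ![1, c] fun j => x j ^ d := by
    ext i j
    fin_cases i <;> simp [powMatrix, cyclicShiftIndex, hrel]
  rw [fderiv_powMatrix_apply_mul_div _ hd, hFx]
  refine vecMulVec_mem_rankStratumTangent (i₀ := 0) one_ne_zero
    (Function.ne_iff.2 ⟨0, hr 0⟩) ![0, -(c * κ)] fun i j => ?_
  fin_cases i
  · simp
  · have hw : c * x j ^ d * w j = c * C 0 j - C 1 j := by
      simp only [w]
      field_simp [hc, hr j]
    simp only [Nat.succ_eq_add_one, Nat.reduceAdd, Fin.isValue, cons_val_zero, cyclicShiftIndex,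
      cons_val', cons_val_fin_one, Fin.mk_one, Matrix.sub_apply, of_apply, cons_val_one, hrel,
      one_mul, neg_mul]
    linear_combination (c * x j ^ d) * ht j + hw

theorem cyclic_shift_EIDS_general
    (N : ℕ) [NeZero N] (d : ℕ) (hd : 1 ≤ d)
    (x : Fin N → ℂ) (hx : x ≠ 0) :
    TransverseAt
      (fun x : Fin N → ℂ =>
        (Matrix.of ![fun j : Fin N => x j ^ d, fun j : Fin N => x (j - 1) ^ d] :
          Matrix (Fin 2) (Fin N) ℂ)) x := by
  have hF : (fun x : Fin N → ℂ =>
      (Matrix.of ![fun j : Fin N => x j ^ d, fun j : Fin N => x (j - 1) ^ d] :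
        Matrix (Fin 2) (Fin N) ℂ)) = powMatrix cyclicShiftIndex d := by
    funext y
    ext i j
    fin_cases i <;> rfl
  rw [hF]
  by_cases hminor : ∀ p q : Fin N, x p ^ d * x (q - 1) ^ d = x q ^ d * x (p - 1) ^ d
  · have hd0 : d ≠ 0 := Nat.one_le_iff_ne_zero.1 hd
    have hr : (fun j => x j ^ d) ≠ 0 := by
      obtain ⟨j, hj⟩ : ∃ j, x j ≠ 0 := Function.ne_iff.1 hx
      exact Function.ne_iff.2 ⟨j, pow_ne_zero d hj⟩
    have hr_ne := ne_zero_of_cyclic_minors_eq_zero hr hminor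
    obtain ⟨c, hc, hrel⟩ := exists_sub_one_eq_mul hr_ne hminor
    exact transverseAt_powMatrix_cyclicShiftIndex_of_sub_one_eq_mul hd0 hr_ne hc hrel
  · push Not at hminor
    obtain ⟨p, q, hpq⟩ := hminor
    refine transverseAt_of_surjective (mulVec_surjective_of_det_submatrix_ne_zero _ ![p, q] ?_)
    simpa [det_fin_two, powMatrix, cyclicShiftIndex, sub_eq_zero] using hpq

/-- For `N ≥ 2` and `d ≥ 1`, the `2×N` matrix family whose first row is
`(x₁^d, …, x_N^d)` and whose second row is its cyclic shift `(x_N^d, x₁^d, …, x_{N−1}^d)`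
defines an EIDS: it is transverse to the rank stratum through its value at every `x ≠ 0`. -/
theorem cyclic_shift_EIDS
    (N : ℕ) [NeZero N] (hN : 2 ≤ N) (d : ℕ) (hd : 1 ≤ d)
    (x : Fin N → ℂ) (hx : x ≠ 0) :
    TransverseAt
      (fun x : Fin N → ℂ =>
        (Matrix.of ![fun j : Fin N => x j ^ d, fun j : Fin N => x (j - 1) ^ d] :
          Matrix (Fin 2) (Fin N) ℂ)) x :=
  cyclic_shift_EIDS_general N d hd x hx
end
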